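/- D⁺ is the largest relation R ⊆ M × M satisfying both ideal properties: if R is any relation such that ((x,y) ∈ I and (y,z) ∈ R imply (x,z) ∈ I) and ((x,y) ∈ R and (y,z) ∈ I imply (x,z) ∈ I), then R ⊆ D⁺; and D⁺ itself satisfies both properties. In particular, for any Kronheimer–Penrose causal structure (M, R, I), i.e. any reflexive, transitive, antisymmetric R with I ⊆ R satisfying both ideal properties, one has R ⊆ D⁺. -/

import Mathlib

open Set Topology

/-- The chronological future of `x`: `I⁺(x) = {y | (x,y) ∈ I}`. -/
def chronFuture {M : Type*} (I : Set (M × M)) (x : M) : Set M := {y | (x, y) ∈ I}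

/-- The chronological past of `y`: `I⁻(y) = {x | (x,y) ∈ I}`. -/
def chronPast {M : Type*} (I : Set (M × M)) (y : M) : Set M := {x | (x, y) ∈ I}

/-- `D⁺_f = {(x,y) : y ∈ cl(I⁺(x))}`. -/
def Dfut {M : Type*} [TopologicalSpace M] (I : Set (M × M)) : Set (M × M) :=
  {p | p.2 ∈ closure (chronFuture I p.1)}

/-- `D⁺_p = {(x,y) : x ∈ cl(I⁻(y))}`. -/
def Dpast {M : Type*} [TopologicalSpace M] (I : Set (M × M)) : Set (M × M) :=
  {p | p.1 ∈ closure (chronPast I p.2)}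

/-- `D⁺ = D⁺_f ∩ D⁺_p`. -/
def Dplus {M : Type*} [TopologicalSpace M] (I : Set (M × M)) : Set (M × M) :=
  Dfut I ∩ Dpast I

/-!
Openness of `I` makes `I⁺(x)` and `I⁻(z)` open, so a point in the closure of one of them that
lies in the other gives a chain through `I`, and transitivity yields the ideal properties of `D⁺`.
Conversely, if `(y, x) ∈ R` then the ideal properties of `R` give `I⁺(x) ⊆ I⁺(y)` and
`I⁻(y) ⊆ I⁻(x)`, so `x ∈ cl I⁺(x)` and `y ∈ cl I⁻(y)` put `(y, x)` in `D⁺`.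
-/

section

variable {M : Type*} [TopologicalSpace M] {I : Set (M × M)}

theorem isOpen_chronFuture (hI : IsOpen I) (x : M) : IsOpen (chronFuture I x) :=
  hI.preimage (Continuous.prodMk_right x)

theorem isOpen_chronPast (hI : IsOpen I) (z : M) : IsOpen (chronPast I z) :=
  hI.preimage (continuous_id.prodMk continuous_const)

theorem mem_of_mem_of_mem_Dpast (hI : IsOpen I)
    (hItrans : ∀ x y z : M, (x, y) ∈ I → (y, z) ∈ I → (x, z) ∈ I) {x y z : M}
    (hxy : (x, y) ∈ I) (hyz : (y, z) ∈ Dpast I) : (x, z) ∈ I := by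
  obtain ⟨w, hxw, hwz⟩ := mem_closure_iff.mp hyz _ (isOpen_chronFuture hI x) hxy
  exact hItrans x w z hxw hwz

theorem mem_of_mem_Dfut_of_mem (hI : IsOpen I)
    (hItrans : ∀ x y z : M, (x, y) ∈ I → (y, z) ∈ I → (x, z) ∈ I) {x y z : M}
    (hxy : (x, y) ∈ Dfut I) (hyz : (y, z) ∈ I) : (x, z) ∈ I := by
  obtain ⟨w, hwz, hxw⟩ := mem_closure_iff.mp hxy _ (isOpen_chronPast hI z) hyz
  exact hItrans x w z hxw hwz

theorem subset_Dfut (hselfF : ∀ x : M, x ∈ closure (chronFuture I x)) {R : Set (M × M)}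
    (hR : ∀ x y z : M, (x, y) ∈ R → (y, z) ∈ I → (x, z) ∈ I) : R ⊆ Dfut I :=
  fun ⟨x, y⟩ hxy => closure_mono (fun _ hyw => hR x y _ hxy hyw) (hselfF y)

theorem subset_Dpast (hselfP : ∀ x : M, x ∈ closure (chronPast I x)) {R : Set (M × M)}
    (hR : ∀ x y z : M, (x, y) ∈ I → (y, z) ∈ R → (x, z) ∈ I) : R ⊆ Dpast I :=
  fun ⟨x, y⟩ hxy => closure_mono (fun _ hwx => hR _ x y hwx hxy) (hselfP x)

theorem subset_Dplus (hselfF : ∀ x : M, x ∈ closure (chronFuture I x))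
    (hselfP : ∀ x : M, x ∈ closure (chronPast I x)) {R : Set (M × M)}
    (hleft : ∀ x y z : M, (x, y) ∈ I → (y, z) ∈ R → (x, z) ∈ I)
    (hright : ∀ x y z : M, (x, y) ∈ R → (y, z) ∈ I → (x, z) ∈ I) : R ⊆ Dplus I :=
  subset_inter (subset_Dfut hselfF hright) (subset_Dpast hselfP hleft)

end

/-- `D⁺` is the largest relation satisfying both ideal properties;
in particular any Kronheimer–Penrose causal structure `(M, R, I)` has `R ⊆ D⁺`. -/
theorem dplus_largest {M : Type*} [TopologicalSpace M] (I : Set (M × M))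
    (hIopen : IsOpen I)
    (hItrans : ∀ x y z : M, (x, y) ∈ I → (y, z) ∈ I → (x, z) ∈ I)
    (hselfF : ∀ x : M, x ∈ closure (chronFuture I x))
    (hselfP : ∀ x : M, x ∈ closure (chronPast I x)) :
    (∀ x y z : M, (x, y) ∈ I → (y, z) ∈ Dplus I → (x, z) ∈ I) ∧
    (∀ x y z : M, (x, y) ∈ Dplus I → (y, z) ∈ I → (x, z) ∈ I) ∧
    (∀ R : Set (M × M),
      (∀ x y z : M, (x, y) ∈ I → (y, z) ∈ R → (x, z) ∈ I) →
      (∀ x y z : M, (x, y) ∈ R → (y, z) ∈ I → (x, z) ∈ I) → R ⊆ Dplus I) ∧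
    (∀ R : Set (M × M),
      (∀ x : M, (x, x) ∈ R) →
      (∀ x y z : M, (x, y) ∈ R → (y, z) ∈ R → (x, z) ∈ R) →
      (∀ x y : M, (x, y) ∈ R → (y, x) ∈ R → x = y) →
      I ⊆ R →
      (∀ x y z : M, (x, y) ∈ I → (y, z) ∈ R → (x, z) ∈ I) →
      (∀ x y z : M, (x, y) ∈ R → (y, z) ∈ I → (x, z) ∈ I) → R ⊆ Dplus I) :=
  ⟨fun _ _ _ hxy hyz => mem_of_mem_of_mem_Dpast hIopen hItrans hxy hyz.2,
    fun _ _ _ hxy hyz => mem_of_mem_Dfut_of_mem hIopen hItrans hxy.1 hyz,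
    fun _ hleft hright => subset_Dplus hselfF hselfP hleft hright,
    fun _ _ _ _ _ hleft hright => subset_Dplus hselfF hselfP hleft hright⟩
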